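/- Every graph G without isolated edges can be decomposed into two edge-disjoint subgraphs H and F such that H is either empty or has minimum degree at least 10^10, and F contains no isolated edges and has degeneracy strictly less than 10^10 + 10^8. -/

import Mathlib

open Classical in
/-- Degree of `v` in `G` (classical, so usable for arbitrary subgraphs). -/
noncomputable def deg {V : Type*} [Fintype V] (G : SimpleGraph V) (v : V) : ℕ :=
  G.degree v

open Classical in
/-- Weighted degree (sum) of `v` under edge weighting `w`. -/
noncomputable def wdeg {V : Type*} [Fintype V] (G : SimpleGraph V) (w : Sym2 V → ℕ) (v : V) : ℕ :=
  ∑ e ∈ G.incidenceFinset v, w e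

/-- `G` has no `K₂`-component: every edge is adjacent to some other edge. -/
def NoIsolatedEdge {V : Type*} (G : SimpleGraph V) : Prop :=
  ∀ u v, G.Adj u v → ∃ x, (G.Adj u x ∧ x ≠ v) ∨ (G.Adj v x ∧ x ≠ u)

/-- `G` admits a neighbour-sum-distinguishing edge weighting with weights in {1,2,3}. -/
def Fulfills123 {V : Type*} [Fintype V] (G : SimpleGraph V) : Prop :=
  ∃ w : Sym2 V → ℕ, (∀ e ∈ G.edgeSet, w e = 1 ∨ w e = 2 ∨ w e = 3) ∧
    ∀ u v, G.Adj u v → wdeg G w u ≠ wdeg G w v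

/-- `F` has degeneracy less than `k`: every nonempty vertex subset contains a
vertex with fewer than `k` neighbours inside it. -/
def DegenLT {V : Type*} (F : SimpleGraph V) (k : ℕ) : Prop :=
  ∀ S : Set V, S.Nonempty → ∃ v ∈ S, (F.neighborSet v ∩ S).ncard < k

/-!
Fix `d > 0` and take `H` maximal among the subgraphs `H ≤ G` whose non-isolated vertices have
degree at least `d` and for which `F = G \ H` has no isolated edge (`⊥` is one). If `F` had a
nonempty vertex set `S` in which every vertex has at least `d + 2` neighbours, we would move the
`F`-edges inside `S` to `H`, except that every `a ∈ S` carrying a pendant `F`-edge leaving `S`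
keeps one edge `a f(a)` into `S`, so that its pendant edge does not become isolated. By Hall's
theorem `f` can be chosen so that each `x ∈ S` is hit at most `deg_S x - (d + 1)` times, since a
set `A ⊆ S` sends at least `(d + 2) |A|` edges into its neighbourhood. Then every vertex of `S`
keeps at least `d` of its edges, which contradicts maximality. So `F` has degeneracy
less than `d + 2`.
-/

open Finset

theorem Finset.exists_card_fiber_le_of_forall_card_le_sum {ι α : Type*} [Fintype ι]
    [DecidableEq α] (t : ι → Finset α) (c : α → ℕ)
    (h : ∀ s : Finset ι, #s ≤ ∑ x ∈ s.biUnion t, c x) :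
    ∃ f : ι → α, (∀ i, f i ∈ t i) ∧ ∀ x, #{i | f i = x} ≤ c x := by
  classical
  -- Hall's theorem after replacing each `x` by `c x` copies of itself
  let copies : α → Finset (α × ℕ) := fun x => {x} ×ˢ range (c x)
  have hcard : ∀ s : Finset ι,
      #(s.biUnion fun i => (t i).biUnion copies) = ∑ x ∈ s.biUnion t, c x := by
    intro s
    rw [← biUnion_biUnion, card_biUnion]
    · simp [copies]
    · intro x _ y _ hxy
      simp only [copies, disjoint_left, mem_product, mem_singleton]
      rintro p ⟨rfl, -⟩ ⟨rfl, -⟩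
      exact hxy rfl
  obtain ⟨g, hg_inj, hg⟩ := (all_card_le_biUnion_card_iff_exists_injective
    fun i => (t i).biUnion copies).mp fun s => (h s).trans_eq (hcard s).symm
  have hg' : ∀ i, (g i).1 ∈ t i ∧ (g i).2 < c (g i).1 := by
    intro i
    obtain ⟨x, hx, hgx⟩ := mem_biUnion.mp (hg i)
    simp only [copies, mem_product, mem_singleton, mem_range] at hgx
    exact ⟨hgx.1 ▸ hx, hgx.1 ▸ hgx.2⟩
  refine ⟨fun i => (g i).1, fun i => (hg' i).1, fun x => ?_⟩
  calc #{i | (g i).1 = x} ≤ #(range (c x)) := by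
        refine card_le_card_of_injOn (fun i => (g i).2) (fun i hi => ?_) fun i hi j hj hij => ?_
        · simp only [coe_filter, mem_univ, true_and, Set.mem_ofPred_eq] at hi
          simpa [← hi] using (hg' i).2
        · simp only [coe_filter, mem_univ, true_and, Set.mem_ofPred_eq] at hi hj
          exact hg_inj (Prod.ext (hi.trans hj.symm) hij)
    _ = c x := card_range _

theorem DegenLT.mono {V : Type*} {F : SimpleGraph V} {k l : ℕ} (h : DegenLT F k) (hkl : k ≤ l) :
    DegenLT F l := fun S hS =>
  let ⟨v, hv, hlt⟩ := h S hS
  ⟨v, hv, hlt.trans_le hkl⟩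

namespace SimpleGraph

variable {V : Type*}

def transferGraph (F : SimpleGraph V) (S : Finset V) (K : Set (Sym2 V)) : SimpleGraph V where
  Adj u v := F.Adj u v ∧ u ∈ S ∧ v ∈ S ∧ s(u, v) ∉ K
  symm := ⟨fun _ _ h => ⟨h.1.symm, h.2.2.1, h.2.1, by rw [Sym2.eq_swap]; exact h.2.2.2⟩⟩
  loopless := ⟨fun _ h => h.1.ne rfl⟩

def HasPendantNeighborOutside (F : SimpleGraph V) (S : Finset V) (a : V) : Prop :=
  ∃ y ∉ S, F.Adj a y ∧ ∀ x, F.Adj y x → x = a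

variable {F : SimpleGraph V} {S : Finset V} {K : Set (Sym2 V)}

theorem transferGraph_le : F.transferGraph S K ≤ F := fun _ _ h => h.1

theorem noIsolatedEdge_sdiff_transferGraph (hF : NoIsolatedEdge F)
    (hK : ∀ e ∈ K, ∃ a ∈ S, ∃ b ∈ S, e = s(a, b) ∧ F.HasPendantNeighborOutside S a)
    (hcover : ∀ a ∈ S, F.HasPendantNeighborOutside S a → ∃ b ∈ S, F.Adj a b ∧ s(a, b) ∈ K) :
    NoIsolatedEdge (F \ F.transferGraph S K) := by
  have sdiff_adj : ∀ {u v}, (F \ F.transferGraph S K).Adj u v ↔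
      F.Adj u v ∧ ¬ (F.Adj u v ∧ u ∈ S ∧ v ∈ S ∧ s(u, v) ∉ K) := Iff.rfl
  have of_mem : ∀ u v, (F \ F.transferGraph S K).Adj u v → u ∈ S →
      ∃ x, ((F \ F.transferGraph S K).Adj u x ∧ x ≠ v) ∨
        ((F \ F.transferGraph S K).Adj v x ∧ x ≠ u) := by
    intro u v huv hu
    rw [sdiff_adj] at huv
    by_cases hv : v ∈ S
    · have huvK : s(u, v) ∈ K := by by_contra h; exact huv.2 ⟨huv.1, hu, hv, h⟩
      obtain ⟨a, -, b, hb, hab, y, hy, hay, -⟩ := hK _ huvK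
      have hay' : (F \ F.transferGraph S K).Adj a y := sdiff_adj.mpr ⟨hay, fun h => hy h.2.2.1⟩
      rcases Sym2.eq_iff.mp hab with ⟨rfl, rfl⟩ | ⟨rfl, rfl⟩
      · exact ⟨y, .inl ⟨hay', fun h => hy (h ▸ hb)⟩⟩
      · exact ⟨y, .inr ⟨hay', fun h => hy (h ▸ hb)⟩⟩
    · by_cases hpend : ∀ x, F.Adj v x → x = u
      · obtain ⟨b, hb, hub, hubK⟩ := hcover u hu ⟨v, hv, huv.1, hpend⟩
        exact ⟨b, .inl ⟨sdiff_adj.mpr ⟨hub, fun h => h.2.2.2 hubK⟩, fun h => hv (h ▸ hb)⟩⟩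
      · push Not at hpend
        obtain ⟨x, hvx, hxu⟩ := hpend
        exact ⟨x, .inr ⟨sdiff_adj.mpr ⟨hvx, fun h => hv h.2.1⟩, hxu⟩⟩
  intro u v huv
  by_cases hu : u ∈ S
  · exact of_mem u v huv hu
  by_cases hv : v ∈ S
  · obtain ⟨x, hx⟩ := of_mem v u huv.symm hv
    exact ⟨x, hx.symm⟩
  obtain ⟨x, hx⟩ := hF u v (sdiff_adj.mp huv).1
  exact ⟨x, hx.imp (fun h => ⟨sdiff_adj.mpr ⟨h.1, fun h' => hu h'.2.1⟩, h.2⟩)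
    (fun h => ⟨sdiff_adj.mpr ⟨h.1, fun h' => hv h'.2.1⟩, h.2⟩)⟩

open Classical

variable [Fintype V]

theorem deg_eq_card_neighborFinset (G : SimpleGraph V) (v : V) :
    deg G v = #(G.neighborFinset v) :=
  (card_neighborFinset_eq_degree G v).symm

theorem deg_mono {G H : SimpleGraph V} (h : G ≤ H) (v : V) : deg G v ≤ deg H v :=
  degree_le_of_le h

theorem deg_sup_le (G H : SimpleGraph V) (v : V) : deg (G ⊔ H) v ≤ deg G v + deg H v := by
  simp only [deg_eq_card_neighborFinset, neighborFinset_sup]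
  exact card_union_le _ _

theorem ncard_neighborSet_inter_coe (F : SimpleGraph V) (S : Finset V) (v : V) :
    (F.neighborSet v ∩ ↑S).ncard = #(F.neighborFinset v ∩ S) := by
  rw [← Set.ncard_coe_finset, coe_inter, coe_neighborFinset]

theorem exists_finset_of_not_degenLT {F : SimpleGraph V} {k : ℕ} (h : ¬ DegenLT F k) :
    ∃ S : Finset V, S.Nonempty ∧ ∀ v ∈ S, k ≤ (F.neighborSet v ∩ ↑S).ncard := by
  simp only [DegenLT, not_forall, not_exists, not_and, not_lt] at h
  obtain ⟨S, hS, hk⟩ := h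
  refine ⟨S.toFinset, Set.toFinset_nonempty.mpr hS, fun v hv => ?_⟩
  rw [Set.coe_toFinset]
  exact hk v (Set.mem_toFinset.mp hv)

theorem sum_card_neighborFinset_inter_le (F : SimpleGraph V) {S A : Finset V} (hA : A ⊆ S) :
    ∑ a ∈ A, #(F.neighborFinset a ∩ S) ≤
      ∑ x ∈ A.biUnion (F.neighborFinset · ∩ S), #(F.neighborFinset x ∩ S) := by
  set N := A.biUnion (F.neighborFinset · ∩ S)
  have above : ∀ a ∈ A, F.neighborFinset a ∩ S = N.bipartiteAbove F.Adj a := by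
    intro a ha
    ext x
    simp only [mem_inter, mem_neighborFinset, mem_bipartiteAbove, N, mem_biUnion]
    exact ⟨fun hx => ⟨⟨a, ha, hx.1, hx.2⟩, hx.1⟩, fun ⟨⟨_, _, _, hxS⟩, hax⟩ => ⟨hax, hxS⟩⟩
  have below : ∀ x ∈ N, A.bipartiteBelow F.Adj x ⊆ F.neighborFinset x ∩ S := by
    intro x _ a ha
    rw [mem_bipartiteBelow] at ha
    exact mem_inter.mpr ⟨(mem_neighborFinset _ _ _).mpr ha.2.symm, hA ha.1⟩
  rw [sum_congr rfl fun a ha => congrArg card (above a ha),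
    sum_card_bipartiteAbove_eq_sum_card_bipartiteBelow]
  exact sum_le_sum fun x hx => card_le_card (below x hx)

theorem card_le_sum_card_neighborFinset_inter_tsub {F : SimpleGraph V} {S : Finset V} {d : ℕ}
    (hS : ∀ v ∈ S, d + 2 ≤ #(F.neighborFinset v ∩ S)) {A : Finset V} (hA : A ⊆ S) :
    #A ≤ ∑ x ∈ A.biUnion (F.neighborFinset · ∩ S), (#(F.neighborFinset x ∩ S) - (d + 1)) := by
  set N := A.biUnion (F.neighborFinset · ∩ S)
  set spare := ∑ x ∈ N, (#(F.neighborFinset x ∩ S) - (d + 1))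
  have hNS : N ⊆ S := biUnion_subset.mpr fun _ _ => inter_subset_right
  have hN : #N ≤ spare := by
    rw [card_eq_sum_ones]
    exact sum_le_sum fun x hx => by have := hS x (hNS hx); omega
  have hA_N : (d + 2) * #A ≤ spare + (d + 1) * #N := calc
    (d + 2) * #A ≤ ∑ a ∈ A, #(F.neighborFinset a ∩ S) := by
      rw [mul_comm, ← smul_eq_mul]
      exact card_nsmul_le_sum _ _ _ fun a ha => hS a (hA ha)
    _ ≤ ∑ x ∈ N, #(F.neighborFinset x ∩ S) := F.sum_card_neighborFinset_inter_le hA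
    _ = ∑ x ∈ N, ((#(F.neighborFinset x ∩ S) - (d + 1)) + (d + 1)) :=
      sum_congr rfl fun x hx => by have := hS x (hNS hx); omega
    _ = spare + (d + 1) * #N := by rw [sum_add_distrib, sum_const, smul_eq_mul, mul_comm]
  rcases le_total #A #N with h | h
  · exact h.trans hN
  · nlinarith

theorem exists_neighbor_choice {F : SimpleGraph V} {S : Finset V} {d : ℕ}
    (hS : ∀ v ∈ S, d + 2 ≤ #(F.neighborFinset v ∩ S)) :
    ∃ f : S → V, (∀ a : S, f a ∈ F.neighborFinset a ∩ S) ∧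
      ∀ x, #{a : S | f a = x} ≤ #(F.neighborFinset x ∩ S) - (d + 1) := by
  refine exists_card_fiber_le_of_forall_card_le_sum _ _ fun s => ?_
  have h := card_le_sum_card_neighborFinset_inter_tsub hS (A := s.image Subtype.val)
    fun x hx => by obtain ⟨a, -, rfl⟩ := mem_image.mp hx; exact a.2
  rwa [card_image_of_injective _ Subtype.val_injective, image_biUnion] at h

theorem mem_of_deg_transferGraph_ne_zero {v : V} (h : deg (F.transferGraph S K) v ≠ 0) :
    v ∈ S := by
  rw [deg_eq_card_neighborFinset, card_ne_zero] at h
  obtain ⟨u, hu⟩ := h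
  exact ((mem_neighborFinset _ _ _).mp hu).2.1

theorem card_neighborFinset_inter_le_deg_transferGraph {v : V} (hv : v ∈ S) :
    #(F.neighborFinset v ∩ S) ≤ deg (F.transferGraph S K) v + #{u | s(v, u) ∈ K} := by
  rw [deg_eq_card_neighborFinset]
  refine (card_le_card fun u hu => ?_).trans (card_union_le _ _)
  simp only [mem_inter, mem_neighborFinset] at hu
  by_cases huK : s(v, u) ∈ K
  · exact mem_union_right _ (mem_filter.mpr ⟨mem_univ _, huK⟩)
  · exact mem_union_left _ ((mem_neighborFinset _ _ _).mpr ⟨hu.1, hv, hu.2, huK⟩)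

theorem card_filter_mk_mem_le (f : S → V) (hK : ∀ e ∈ K, ∃ a : S, e = s(↑a, f a)) (v : V) :
    #{u | s(v, u) ∈ K} ≤ #{a : S | f a = v} + 1 := calc
  #{u | s(v, u) ∈ K} ≤ #(({a : S | f a = v} : Finset S).image Subtype.val ∪
      ({a : S | ↑a = v} : Finset S).image f) := by
    refine card_le_card fun u hu => ?_
    obtain ⟨a, hvu⟩ := hK _ (mem_filter.mp hu).2
    rcases Sym2.eq_iff.mp hvu with ⟨rfl, rfl⟩ | ⟨rfl, rfl⟩
    · exact mem_union_right _ (mem_image_of_mem f (mem_filter.mpr ⟨mem_univ _, rfl⟩))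
    · exact mem_union_left _ (mem_image_of_mem _ (mem_filter.mpr ⟨mem_univ _, rfl⟩))
  _ ≤ #{a : S | f a = v} + #{a : S | ↑a = v} :=
    (card_union_le _ _).trans (add_le_add card_image_le card_image_le)
  _ ≤ #{a : S | f a = v} + 1 := by
    refine Nat.add_le_add_left (card_le_one.mpr fun a ha b hb => Subtype.ext ?_) _
    exact (mem_filter.mp ha).2.trans (mem_filter.mp hb).2.symm

theorem le_deg_transferGraph {d : ℕ} (f : S → V) (hK : ∀ e ∈ K, ∃ a : S, e = s(↑a, f a))
    (hload : ∀ x, #{a : S | f a = x} ≤ #(F.neighborFinset x ∩ S) - (d + 1)) {v : V} (hv : v ∈ S)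
    (hdeg : d + 1 ≤ #(F.neighborFinset v ∩ S)) : d ≤ deg (F.transferGraph S K) v := by
  have := card_neighborFinset_inter_le_deg_transferGraph (F := F) (K := K) hv
  have := card_filter_mk_mem_le f hK v
  have := hload v
  omega

def MinDegOnSupport (H : SimpleGraph V) (d : ℕ) : Prop :=
  ∀ v, deg H v ≠ 0 → d ≤ deg H v

theorem MinDegOnSupport.sup {H T : SimpleGraph V} {d : ℕ} (hH : H.MinDegOnSupport d)
    (hT : T.MinDegOnSupport d) : (H ⊔ T).MinDegOnSupport d := by
  intro v hv
  by_cases hHv : deg H v = 0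
  · have hTv : deg T v ≠ 0 := fun hTv => hv (by have := deg_sup_le H T v; omega)
    exact (hT v hTv).trans (deg_mono le_sup_right v)
  · exact (hH v hHv).trans (deg_mono le_sup_left v)

def IsAdmissiblePart (d : ℕ) (G H : SimpleGraph V) : Prop :=
  H ≤ G ∧ H.MinDegOnSupport d ∧ NoIsolatedEdge (G \ H)

theorem isAdmissiblePart_bot (d : ℕ) {G : SimpleGraph V} (hG : NoIsolatedEdge G) :
    IsAdmissiblePart d G ⊥ := by
  refine ⟨bot_le, fun v hv => absurd ?_ hv, by rwa [sdiff_bot]⟩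
  rw [deg_eq_card_neighborFinset, neighborFinset_bot, card_empty]

theorem exists_isAdmissiblePart_gt {d : ℕ} (hd : 0 < d) {G H : SimpleGraph V}
    (hH : IsAdmissiblePart d G H) {S : Finset V} (hSne : S.Nonempty)
    (hS : ∀ v ∈ S, d + 2 ≤ ((G \ H).neighborSet v ∩ ↑S).ncard) :
    ∃ H', IsAdmissiblePart d G H' ∧ H < H' := by
  obtain ⟨hHG, hHdeg, hGH⟩ := hH
  generalize hF : G \ H = F at hS hGH
  replace hS : ∀ v ∈ S, d + 2 ≤ #(F.neighborFinset v ∩ S) := fun v hv =>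
    ncard_neighborSet_inter_coe F S v ▸ hS v hv
  obtain ⟨f, hf, hload⟩ := exists_neighbor_choice hS
  have hfS : ∀ a, f a ∈ S := fun a => (mem_inter.mp (hf a)).2
  have hfF : ∀ a : S, F.Adj a (f a) := fun a =>
    (mem_neighborFinset _ _ _).mp (mem_inter.mp (hf a)).1
  set K : Set (Sym2 V) := {e | ∃ a : S, F.HasPendantNeighborOutside S a ∧ e = s(↑a, f a)}
  have hK : ∀ e ∈ K, ∃ a : S, e = s(↑a, f a) := fun _ ⟨a, _, he⟩ => ⟨a, he⟩
  have hT : ∀ v ∈ S, d ≤ deg (F.transferGraph S K) v := fun v hv =>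
    le_deg_transferGraph f hK hload hv (by have := hS v hv; omega)
  refine ⟨H ⊔ F.transferGraph S K, ⟨sup_le hHG (transferGraph_le.trans (hF ▸ sdiff_le)),
    hHdeg.sup fun v hv => hT v (mem_of_deg_transferGraph_ne_zero hv), ?_⟩, left_lt_sup.mpr ?_⟩
  · rw [← sdiff_sdiff_left, hF]
    refine noIsolatedEdge_sdiff_transferGraph hGH ?_ ?_
    · rintro _ ⟨a, ha, rfl⟩
      exact ⟨a, a.2, f a, hfS a, rfl, ha⟩
    · intro a ha hpend
      exact ⟨f ⟨a, ha⟩, hfS _, hfF ⟨a, ha⟩, ⟨a, ha⟩, hpend, rfl⟩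
  · obtain ⟨v, hv⟩ := hSne
    have hpos : 0 < #((F.transferGraph S K).neighborFinset v) :=
      deg_eq_card_neighborFinset _ v ▸ hd.trans_le (hT v hv)
    obtain ⟨u, hu⟩ := card_pos.mp hpos
    have hTvu : (F.transferGraph S K).Adj v u := (mem_neighborFinset _ _ _).mp hu
    have hFvu := transferGraph_le hTvu
    rw [← hF] at hFvu
    exact fun hTH => hFvu.2 (hTH hTvu)

theorem exists_decomposition_degenLT {d : ℕ} (hd : 0 < d) {G : SimpleGraph V}
    (hG : NoIsolatedEdge G) :
    ∃ H F : SimpleGraph V, Disjoint H F ∧ H ⊔ F = G ∧ H.MinDegOnSupport d ∧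
      NoIsolatedEdge F ∧ DegenLT F (d + 2) := by
  obtain ⟨H, hH, hmax⟩ := (Set.toFinite {H | IsAdmissiblePart d G H}).exists_maximal
    ⟨⊥, isAdmissiblePart_bot d hG⟩
  refine ⟨H, G \ H, disjoint_sdiff_self_right, sup_sdiff_cancel_right hH.1, hH.2.1, hH.2.2, ?_⟩
  by_contra hdegen
  obtain ⟨S, hSne, hS⟩ := exists_finset_of_not_degenLT hdegen
  obtain ⟨H', hH', hlt⟩ := exists_isAdmissiblePart_gt hd hH hSne hS
  exact hlt.not_ge (hmax hH' hlt.le)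

end SimpleGraph

/-- Every graph without isolated edges decomposes into `H` (empty or of minimum
degree ≥ 10^10) and `F` (no isolated edges, degeneracy < 10^10 + 10^8). -/
theorem stmt_16 {V : Type*} [Fintype V] (G : SimpleGraph V)
    (hG : NoIsolatedEdge G) :
    ∃ H F : SimpleGraph V, Disjoint H F ∧ H ⊔ F = G ∧
      (∀ v : V, deg H v ≠ 0 → 10 ^ 10 ≤ deg H v) ∧
      NoIsolatedEdge F ∧ DegenLT F (10 ^ 10 + 10 ^ 8) := by
  obtain ⟨H, F, hdisj, hsup, hH, hF, hdegen⟩ :=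
    SimpleGraph.exists_decomposition_degenLT (d := 10 ^ 10) (by norm_num) hG
  exact ⟨H, F, hdisj, hsup, hH, hF, hdegen.mono (by norm_num)⟩
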